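/- arXiv:1010.1902 — 2 statements merged into one kernel-verified Lean document; each statement's English description precedes it below -/
import Mathlib

section
/- Let R:(0,∞)→(0,∞) be monotone on (0,∞) and regularly varying at +∞ with index −α where α<1; write R(t)=L(t)t^{−α} with L slowly varying, and let σ_n² = Σ_{k=1}^n R(k). Then there exist C>0 and n₀∈ℕ such that for all n≥n₀ and all real t∈[1, n/2], the tail sum S₂ = σ_n^{−2} Σ_{k=⌊n/t⌋}^{n} R(k) cos(2πkt/n) satisfies |S₂| ≤ C max( t^{α−1} L(n/t)/L(n), 1/t ). -/
/-!
Put `θ = 2πt/n` and `m = ⌊n/t⌋`. The partial sums of `cos (kθ)` are at most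
`1 / sin (θ/2) ≤ n/(2t)` in absolute value, so Abel summation against the monotone weights `R k`,
`m ≤ k ≤ n`, bounds the numerator by `max (R m) (R n) · n/t`. Regular variation gives
`R (n/2) ≳ R n`, hence `σ_n² ≳ n R(n)` whether `R` increases or decreases, and, for decreasing `R`,
`R m ≤ R (x/2) ≲ R x` with `x = n/t`, uniformly in `x ≥ 2`. So
`|S₂| ≲ (R n + R (n/t)) / (t R n)`, and `R (n/t) / (t R n) = t^(α-1) L(n/t) / L(n)`.
-/

open Filter Real

/-- A function `f` is regularly varying at `+∞` with index `β` if for every `λ > 0`,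
`f(λx)/f(x) → λ^β` as `x → +∞`. -/
def RegularlyVarying (f : ℝ → ℝ) (β : ℝ) : Prop :=
  ∀ l : ℝ, 0 < l → Filter.Tendsto (fun x => f (l * x) / f x) Filter.atTop (nhds (l ^ β))

open Finset

theorem abs_sum_range_cos_nat_mul_le {θ : ℝ} (hθ : 0 < sin (θ / 2)) (N : ℕ) :
    |∑ k ∈ range N, cos (k * θ)| ≤ 1 / sin (θ / 2) := by
  set z : ℂ := Complex.exp (Complex.I * θ)
  have hz1 : ‖z - 1‖ = 2 * sin (θ / 2) := by
    rw [Complex.norm_exp_I_mul_ofReal_sub_one, Real.norm_eq_abs, abs_of_pos (by positivity)]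
  have hzN : ‖z ^ N - 1‖ ≤ 2 := by
    calc ‖z ^ N - 1‖ ≤ ‖z‖ ^ N + 1 := by simpa using norm_sub_le (z ^ N) 1
      _ = 2 := by rw [Complex.norm_exp_I_mul_ofReal, one_pow]; norm_num
  have hre : ∀ k : ℕ, (z ^ k).re = cos (k * θ) := fun k => by
    rw [← Complex.exp_nat_mul, mul_left_comm, ← Complex.ofReal_natCast, ← Complex.ofReal_mul,
      mul_comm, Complex.exp_ofReal_mul_I_re]
  calc |∑ k ∈ range N, cos (k * θ)| = |(∑ k ∈ range N, z ^ k).re| := by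
        simp only [Complex.re_sum, hre]
    _ ≤ ‖z ^ N - 1‖ / ‖z - 1‖ := by
        rw [← norm_div, ← geom_sum_eq (by intro h; simp [h] at hz1; linarith)]
        exact Complex.abs_re_le_norm _
    _ ≤ 2 / (2 * sin (θ / 2)) := by rw [hz1]; gcongr
    _ = 1 / sin (θ / 2) := by field_simp

theorem abs_sum_range_cos_nat_mul_le_pi_div {θ : ℝ} (h0 : 0 < θ) (hπ : θ ≤ π) (N : ℕ) :
    |∑ k ∈ range N, cos (k * θ)| ≤ π / θ := by
  have hsin : θ / π ≤ sin (θ / 2) := by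
    calc θ / π = 2 / π * (θ / 2) := by ring
      _ ≤ sin (θ / 2) := mul_le_sin (by positivity) (by linarith)
  have hpos : 0 < θ / π := by positivity
  calc _ ≤ 1 / sin (θ / 2) := abs_sum_range_cos_nat_mul_le (hpos.trans_le hsin) N
    _ ≤ 1 / (θ / π) := by gcongr
    _ = π / θ := one_div_div θ π

theorem abs_sum_Icc_mul_le_of_abs_sum_range_le {f g : ℕ → ℝ} {m n : ℕ} (hmn : m ≤ n)
    {D : ℝ} (hG : ∀ j, |∑ i ∈ range j, g i| ≤ D) :
    |∑ i ∈ Icc m n, f i * g i|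
      ≤ (|f m| + |f n| + ∑ i ∈ Ico m n, |f (i + 1) - f i|) * D := by
  have hparts := sum_Ico_by_parts f g (show m < n + 1 by omega)
  simp only [add_tsub_cancel_right, smul_eq_mul] at hparts
  rw [← Ico_add_one_right_eq_Icc, hparts]
  have hS : |∑ i ∈ Ico m n, (f (i + 1) - f i) * ∑ j ∈ range (i + 1), g j|
      ≤ (∑ i ∈ Ico m n, |f (i + 1) - f i|) * D := by
    rw [sum_mul]
    refine (abs_sum_le_sum_abs _ _).trans (sum_le_sum fun i _ => ?_)
    rw [abs_mul]
    gcongr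
    exact hG _
  calc _ ≤ |f n * ∑ i ∈ range (n + 1), g i| + |f m * ∑ i ∈ range m, g i|
        + |∑ i ∈ Ico m n, (f (i + 1) - f i) * ∑ j ∈ range (i + 1), g j| :=
        (abs_sub _ _).trans (add_le_add_left (abs_sub _ _) _)
    _ ≤ |f n| * D + |f m| * D + (∑ i ∈ Ico m n, |f (i + 1) - f i|) * D := by
        rw [abs_mul, abs_mul]
        gcongr
        exacts [hG _, hG _]
    _ = _ := by ring

theorem sum_Ico_abs_sub_of_monotoneOn {f : ℕ → ℝ} {m n : ℕ} (hmn : m ≤ n)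
    (hf : MonotoneOn f (Set.Icc m n)) :
    ∑ i ∈ Ico m n, |f (i + 1) - f i| = f n - f m := by
  rw [sum_congr rfl fun i hi => abs_of_nonneg (sub_nonneg.2 ?_)]
  · rw [sum_Ico_eq_sub _ hmn, sum_range_sub, sum_range_sub]
    ring
  · rw [mem_Ico] at hi
    exact hf ⟨hi.1, hi.2.le⟩ ⟨by omega, hi.2⟩ (Nat.le_succ i)

theorem abs_sum_Icc_mul_cos_nat_mul_le {f : ℕ → ℝ} {m n : ℕ} (hmn : m ≤ n)
    (hf : MonotoneOn f (Set.Icc m n) ∨ AntitoneOn f (Set.Icc m n)) (hfm : 0 ≤ f m)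
    (hfn : 0 ≤ f n) {θ : ℝ} (h0 : 0 < θ) (hπ : θ ≤ π) :
    |∑ k ∈ Icc m n, f k * cos (k * θ)| ≤ 2 * max (f m) (f n) * (π / θ) := by
  have hvar : ∑ i ∈ Ico m n, |f (i + 1) - f i| = |f n - f m| := by
    have hm : m ∈ Set.Icc m n := ⟨le_rfl, hmn⟩
    have hn : n ∈ Set.Icc m n := ⟨hmn, le_rfl⟩
    rcases hf with hf | hf
    · rw [sum_Ico_abs_sub_of_monotoneOn hmn hf, abs_of_nonneg (sub_nonneg.2 (hf hm hn hmn))]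
    · have := sum_Ico_abs_sub_of_monotoneOn hmn hf.neg
      simp only [neg_sub_neg, abs_sub_comm (f _) (f (_ + 1))] at this
      rw [this, abs_sub_comm, abs_of_nonneg (sub_nonneg.2 (hf hm hn hmn))]
  have hmax := two_nsmul_sup_eq_add_add_abs_sub (f m) (f n)
  calc _ ≤ (|f m| + |f n| + ∑ i ∈ Ico m n, |f (i + 1) - f i|) * (π / θ) :=
        abs_sum_Icc_mul_le_of_abs_sum_range_le hmn (abs_sum_range_cos_nat_mul_le_pi_div h0 hπ)
    _ = _ := by
        rw [hvar, abs_of_nonneg hfm, abs_of_nonneg hfn, ← hmax, two_nsmul, two_mul]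

theorem abs_sum_Icc_floor_mul_cos_le {R : ℝ → ℝ} (hR0 : ∀ x, 0 < x → 0 ≤ R x)
    (hR : MonotoneOn R (Set.Ioi 0) ∨ AntitoneOn R (Set.Ioi 0)) {n : ℕ} {t : ℝ}
    (ht1 : 1 ≤ t) (htn : t ≤ n / 2) :
    |∑ k ∈ Icc ⌊(n : ℝ) / t⌋₊ n, R k * cos (2 * π * k * t / n)|
      ≤ max (R ⌊(n : ℝ) / t⌋₊) (R n) * (n / t) := by
  set m := ⌊(n : ℝ) / t⌋₊
  have ht0 : 0 < t := by linarith
  have hn0 : (0 : ℝ) < n := by linarith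
  have hm1 : 1 ≤ m := Nat.le_floor (by rw [Nat.cast_one, le_div_iff₀ ht0]; linarith)
  have hmn : m ≤ n := Nat.floor_le_of_le (div_le_self hn0.le ht1)
  have hmaps : Set.MapsTo (Nat.cast : ℕ → ℝ) (Set.Icc m n) (Set.Ioi 0) := fun k hk => by
    have : 1 ≤ k := hm1.trans hk.1
    exact Set.mem_Ioi.2 (by positivity)
  have hRk : MonotoneOn (fun k : ℕ => R k) (Set.Icc m n) ∨
      AntitoneOn (fun k : ℕ => R k) (Set.Icc m n) :=
    hR.imp (fun h => h.comp (Nat.mono_cast.monotoneOn _) hmaps)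
      (fun h => h.comp_MonotoneOn (Nat.mono_cast.monotoneOn _) hmaps)
  have hcos : ∀ k : ℕ, 2 * π * k * t / n = k * (2 * π * t / n) := fun k => by ring
  simp only [hcos]
  calc _ ≤ 2 * max (R m) (R n) * (π / (2 * π * t / n)) :=
        abs_sum_Icc_mul_cos_nat_mul_le hmn hRk (hR0 _ (by positivity)) (hR0 _ hn0)
          (by positivity) (by rw [div_le_iff₀ hn0]; nlinarith [pi_pos])
    _ = max (R m) (R n) * (n / t) := by field_simp

theorem half_mul_min_le_sum_Icc {R : ℝ → ℝ} (hR0 : ∀ x, 0 < x → 0 ≤ R x)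
    (hR : MonotoneOn R (Set.Ioi 0) ∨ AntitoneOn R (Set.Ioi 0)) {n : ℕ} (hn : 0 < n) :
    n / 2 * min (R (n / 2)) (R n) ≤ ∑ k ∈ Icc 1 n, R k := by
  have hn' : (0 : ℝ) < n := by exact_mod_cast hn
  have hmin : 0 ≤ min (R (n / 2)) (R n) := le_min (hR0 _ (by positivity)) (hR0 _ hn')
  -- `(n + 1) / 2 = ⌈n / 2⌉`
  have hterm : ∀ k ∈ Icc ((n + 1) / 2) n, min (R (n / 2)) (R n) ≤ R k := by
    intro k hk
    rw [mem_Icc] at hk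
    have hk2 : (n : ℝ) / 2 ≤ k := by
      rw [div_le_iff₀ two_pos]; exact_mod_cast (show n ≤ k * 2 by omega)
    have hkn : (k : ℝ) ≤ n := by exact_mod_cast hk.2
    have hk0 : (0 : ℝ) < n / 2 := by positivity
    rcases hR with hR | hR
    · exact (min_le_left _ _).trans (hR hk0 (hk0.trans_le hk2) hk2)
    · exact (min_le_right _ _).trans (hR (hk0.trans_le hk2) hn' hkn)
  calc n / 2 * min (R (n / 2)) (R n)
      ≤ ((n + 1 - (n + 1) / 2 : ℕ) : ℝ) * min (R (n / 2)) (R n) := by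
        gcongr
        rw [div_le_iff₀ two_pos]
        exact_mod_cast (show n ≤ (n + 1 - (n + 1) / 2) * 2 by omega)
    _ ≤ ∑ k ∈ Icc ((n + 1) / 2) n, R k := by
        simpa [nsmul_eq_mul] using card_nsmul_le_sum _ _ _ hterm
    _ ≤ ∑ k ∈ Icc 1 n, R k :=
        sum_le_sum_of_subset_of_nonneg (Icc_subset_Icc (by omega) le_rfl)
          fun k hk _ => hR0 k (by have := (mem_Icc.1 hk).1; positivity)

namespace RegularlyVarying

variable {f : ℝ → ℝ} {β l : ℝ}

theorem eventually_lt_comp_mul (hf : RegularlyVarying f β) (hpos : ∀ᶠ x in atTop, 0 < f x)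
    (hl : 0 < l) : ∀ᶠ x in atTop, l ^ β / 2 * f x < f (l * x) := by
  have hlim : l ^ β / 2 < l ^ β := half_lt_self (by positivity)
  filter_upwards [(hf l hl).eventually (lt_mem_nhds hlim), hpos] with x hx hfx
  exact (lt_div_iff₀ hfx).1 hx

theorem eventually_comp_mul_lt (hf : RegularlyVarying f β) (hpos : ∀ᶠ x in atTop, 0 < f x)
    (hl : 0 < l) : ∀ᶠ x in atTop, f (l * x) < 2 * l ^ β * f x := by
  have hlim : l ^ β < 2 * l ^ β := by linarith [rpow_pos_of_pos hl β]
  filter_upwards [(hf l hl).eventually (gt_mem_nhds hlim), hpos] with x hx hfx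
  exact (div_lt_iff₀ hfx).1 hx

theorem exists_pos_eventually_mul_le_sum_Icc (hf : RegularlyVarying f β)
    (hpos : ∀ x, 0 < x → 0 < f x)
    (hmono : MonotoneOn f (Set.Ioi 0) ∨ AntitoneOn f (Set.Ioi 0)) :
    ∃ c > 0, ∀ᶠ n : ℕ in atTop, c * (n * f n) ≤ ∑ k ∈ Icc 1 n, f k := by
  have hpos' : ∀ᶠ x in atTop, 0 < f x := (eventually_gt_atTop 0).mono hpos
  set c₀ := (1 / 2 : ℝ) ^ β / 2
  refine ⟨min c₀ 1 / 2, by positivity, ?_⟩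
  filter_upwards [tendsto_natCast_atTop_atTop.eventually
    (hf.eventually_lt_comp_mul hpos' one_half_pos), eventually_gt_atTop 0] with n hn hn0
  have hmin : min c₀ 1 * f n ≤ min (f (n / 2)) (f n) := by
    rw [min_mul_of_nonneg _ _ (hpos _ (by exact_mod_cast hn0)).le, one_mul, ← one_div_mul_eq_div]
    exact min_le_min_right _ hn.le
  calc min c₀ 1 / 2 * (n * f n) = n / 2 * (min c₀ 1 * f n) := by ring
    _ ≤ n / 2 * min (f (n / 2)) (f n) := by gcongr
    _ ≤ _ := half_mul_min_le_sum_Icc (fun x hx => (hpos x hx).le) hmono hn0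

theorem exists_pos_le_mul_of_mem_Icc_half (hf : RegularlyVarying f β)
    (hpos : ∀ x, 0 < x → 0 < f x)
    (hmono : MonotoneOn f (Set.Ioi 0) ∨ AntitoneOn f (Set.Ioi 0)) :
    ∃ K > 0, ∀ x, 2 ≤ x → ∀ y ∈ Set.Icc (x / 2) x, f y ≤ K * f x := by
  rcases hmono with hmono | hanti
  · refine ⟨1, one_pos, fun x hx y hy => ?_⟩
    rw [one_mul]
    exact hmono (show (0 : ℝ) < y by linarith [hy.1]) (show (0 : ℝ) < x by linarith) hy.2
  have hpos' : ∀ᶠ x in atTop, 0 < f x := (eventually_gt_atTop 0).mono hpos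
  obtain ⟨X, hX⟩ := eventually_atTop.1
    ((hf.eventually_comp_mul_lt hpos' one_half_pos).and (eventually_ge_atTop 2))
  simp only [one_div_mul_eq_div] at hX
  have hX0 : 0 < X := by linarith [(hX X le_rfl).2]
  refine ⟨max (2 * (1 / 2) ^ β) (f 1 / f X), lt_max_of_lt_left (by positivity),
    fun x hx y hy => ?_⟩
  have hx0 : 0 < x := by linarith
  have hfx := hpos x hx0
  have hy : f y ≤ f (x / 2) := hanti (show (0 : ℝ) < x / 2 by linarith)
    (show (0 : ℝ) < y by linarith [hy.1]) (by linarith [hy.1])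
  rcases le_total X x with hXx | hxX
  · calc f y ≤ f (x / 2) := hy
      _ ≤ 2 * (1 / 2) ^ β * f x := ((hX x hXx).1).le
      _ ≤ _ := by gcongr; exact le_max_left _ _
  · calc f y ≤ f (x / 2) := hy
      _ ≤ f 1 :=
          hanti (Set.mem_Ioi.2 one_pos) (show (0 : ℝ) < x / 2 by positivity) (by linarith)
      _ = f 1 / f X * f X := by field_simp [(hpos X hX0).ne']
      _ ≤ f 1 / f X * f x := by
          gcongr
          · exact (div_pos (hpos 1 one_pos) (hpos X hX0)).le
          · exact hanti hx0 hX0 hxX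
      _ ≤ _ := by gcongr; exact le_max_right _ _

end RegularlyVarying

theorem apply_div_div_eq_rpow_sub_one_mul {R L : ℝ → ℝ} {α y t : ℝ}
    (hL : ∀ x, 0 < x → R x = L x * x ^ (-α)) (hy : 0 < y) (ht : 0 < t) (hLy : L y ≠ 0) :
    R (y / t) / t = t ^ (α - 1) * L (y / t) / L y * R y := by
  rw [hL _ (by positivity), hL y hy, div_rpow hy.le ht.le, rpow_neg ht.le, rpow_sub ht, rpow_one]
  field_simp

theorem tail_sum_bound_general
    (R : ℝ → ℝ) (hRpos : ∀ x : ℝ, 0 < x → 0 < R x)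
    (hRmono : MonotoneOn R (Set.Ioi (0 : ℝ)) ∨ AntitoneOn R (Set.Ioi (0 : ℝ)))
    (α : ℝ) (hRV : RegularlyVarying R (-α))
    (L : ℝ → ℝ) (hL : ∀ x : ℝ, 0 < x → R x = L x * x ^ (-α)) :
    ∃ C : ℝ, 0 < C ∧ ∃ n₀ : ℕ, ∀ n : ℕ, n₀ ≤ n → ∀ t : ℝ, 1 ≤ t → t ≤ (n : ℝ) / 2 →
      |(∑ k ∈ Finset.Icc ⌊(n : ℝ) / t⌋₊ n, R k * Real.cos (2 * π * k * t / n)) /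
          (∑ k ∈ Finset.Icc 1 n, R k)| ≤
        C * max (t ^ (α - 1) * L ((n : ℝ) / t) / L n) (1 / t) := by
  obtain ⟨c, hc, hden⟩ := hRV.exists_pos_eventually_mul_le_sum_Icc hRpos hRmono
  obtain ⟨K, hK, hRK⟩ := hRV.exists_pos_le_mul_of_mem_Icc_half hRpos hRmono
  obtain ⟨n₀, hn₀⟩ := eventually_atTop.1 hden
  refine ⟨(1 + K) / c, by positivity, n₀, fun n hn t ht1 htn => ?_⟩
  have ht0 : 0 < t := by linarith
  have hn0 : (0 : ℝ) < n := by linarith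
  have hRn : 0 < R n := hRpos n hn0
  set x := (n : ℝ) / t
  have hx2 : 2 ≤ x := by rw [le_div_iff₀ ht0]; linarith
  have hRm : R ⌊x⌋₊ ≤ K * R x :=
    hRK x hx2 _ ⟨by linarith [Nat.lt_floor_add_one x], Nat.floor_le (by linarith)⟩
  have hRx : R x / t = t ^ (α - 1) * L x / L n * R n :=
    apply_div_div_eq_rpow_sub_one_mul hL hn0 ht0 fun h => by simp [hL n hn0, h] at hRn
  set B := t ^ (α - 1) * L x / L n
  have hdenpos : 0 < ∑ k ∈ Icc 1 n, R k :=
    (by positivity : 0 < c * (n * R n)).trans_le (hn₀ n hn)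
  rw [abs_div, abs_of_pos hdenpos, div_le_iff₀ hdenpos]
  calc _ ≤ max (R ⌊x⌋₊) (R n) * (n / t) :=
        abs_sum_Icc_floor_mul_cos_le (fun y hy => (hRpos y hy).le) hRmono ht1 htn
    _ ≤ (R n + K * R x) * (n / t) := by
        gcongr
        exact max_le (hRm.trans (le_add_of_nonneg_left hRn.le))
          (le_add_of_nonneg_right (by have := hRpos x (by positivity); positivity))
    _ = n * R n / t + K * n * (R x / t) := by ring
    _ = n * R n * (1 / t + K * B) := by rw [hRx]; ring
    _ ≤ n * R n * ((1 + K) * max B (1 / t)) := by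
        gcongr
        nlinarith [le_max_left B (1 / t), le_max_right B (1 / t)]
    _ ≤ (∑ k ∈ Icc 1 n, R k) / c * ((1 + K) * max B (1 / t)) := by
        gcongr
        rw [le_div_iff₀ hc, mul_comm]
        exact hn₀ n hn
    _ = _ := by ring

/-- Estimate for the tail sum `S₂ = σ_n^{-2} Σ_{k=⌊n/t⌋}^n R(k) cos(2πkt/n)` for a
monotone regularly varying `R(t) = L(t) t^{-α}`, `α < 1`:
`|S₂| ≤ C max(t^{α-1} L(n/t)/L(n), 1/t)` for `n` large and `t ∈ [1, n/2]`. -/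
theorem tail_sum_bound
    (R : ℝ → ℝ) (hRpos : ∀ x : ℝ, 0 < x → 0 < R x)
    (hRmono : MonotoneOn R (Set.Ioi (0 : ℝ)) ∨ AntitoneOn R (Set.Ioi (0 : ℝ)))
    (α : ℝ) (hα : α < 1) (hRV : RegularlyVarying R (-α))
    (L : ℝ → ℝ) (hL : ∀ x : ℝ, 0 < x → R x = L x * x ^ (-α))
    (hLslow : RegularlyVarying L 0) :
    ∃ C : ℝ, 0 < C ∧ ∃ n₀ : ℕ, ∀ n : ℕ, n₀ ≤ n → ∀ t : ℝ, 1 ≤ t → t ≤ (n : ℝ) / 2 →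
      |(∑ k ∈ Finset.Icc ⌊(n : ℝ) / t⌋₊ n, R k * Real.cos (2 * π * k * t / n)) /
          (∑ k ∈ Finset.Icc 1 n, R k)| ≤
        C * max (t ^ (α - 1) * L ((n : ℝ) / t) / L n) (1 / t) :=
  tail_sum_bound_general R hRpos hRmono α hRV L hL
end

section
/- Let R:(0,∞)→(0,∞) be monotone on (0,∞), bounded away from 0 and ∞ on every compact subset of (0,∞), and regularly varying at +∞ with index −α where α<1. Let σ_n² = Σ_{k=1}^n R(k) and ρ_n(t) = σ_n^{−2} Σ_{k=1}^n R(k) cos(2πkt/n). Then for every δ>0 there exist C>0 and n₀∈ℕ such that for all n≥n₀ and all real t∈[1, n/2], |ρ_n(t)| ≤ C max( t^{α−1+δ}, 1/t ). -/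
/-!
Write `θ = 2πt/n`. The partial sums of `cos (kθ)` are bounded by `1 / sin (θ/2) ≤ n/(2t)`, so
Abel summation bounds `∑ R(k) cos (kθ)` over a range where `R` is monotone by `n/t` times the
largest weight. If `R` increases, this applied to the whole sum gives `n R(n) / t`, while
`σ_n² ≥ (n/2) R(n/2) ≳ n R(n)` by regular variation.

If `R` decreases, then `α ≥ 0`; pick `s ∈ (α, 1)` with `s ≤ α + δ`. Regular variation at `λ = 2`
and a dyadic iteration give Potter's bound `R(x) ≤ P (y/x)^s R(y)` for `1 ≤ x ≤ y`. Split the sum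
at `m = ⌊n/(2t)⌋`: the head is at most `P n^s R(n) ∑_{k ≤ m} k^{-s} ≲ t^{s-1} n R(n)`, the Abel
tail is at most `(n/t) R(m+1) ≲ t^{s-1} n R(n)`, and `σ_n² ≥ n R(n)`.
-/

open Filter Real

open Finset

lemma abs_sum_range_cos_mul_le {θ : ℝ} (hθ : sin (θ / 2) ≠ 0) (k : ℕ) :
    |∑ i ∈ range k, cos (i * θ)| ≤ 1 / |sin (θ / 2)| := by
  set z : ℂ := Complex.exp (Complex.I * θ)
  have hz : ‖z - 1‖ = 2 * |sin (θ / 2)| := by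
    rw [Complex.norm_exp_I_mul_ofReal_sub_one, norm_mul, Real.norm_ofNat, Real.norm_eq_abs]
  have hz1 : z ≠ 1 := by
    rw [← sub_ne_zero, ← norm_ne_zero_iff, hz]
    positivity
  have hre : ∀ i : ℕ, cos (i * θ) = (z ^ i).re := fun i => by
    rw [← Complex.exp_nat_mul, ← Complex.exp_ofReal_mul_I_re]
    push_cast
    ring_nf
  calc |∑ i ∈ range k, cos (i * θ)| = |((z ^ k - 1) / (z - 1)).re| := by
        simp only [hre, ← Complex.re_sum, geom_sum_eq hz1]
    _ ≤ ‖z ^ k - 1‖ / ‖z - 1‖ := (Complex.abs_re_le_norm _).trans (norm_div _ _).le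
    _ ≤ 2 / (2 * |sin (θ / 2)|) := by
        rw [hz]
        gcongr
        calc ‖z ^ k - 1‖ ≤ ‖z ^ k‖ + ‖(1 : ℂ)‖ := norm_sub_le _ _
          _ = 2 := by rw [norm_pow, Complex.norm_exp_I_mul_ofReal]; norm_num
    _ = 1 / |sin (θ / 2)| := by field_simp

lemma abs_sum_range_cos_le_div {n : ℕ} {t : ℝ} (ht1 : 1 ≤ t) (ht2 : t ≤ n / 2) (k : ℕ) :
    |∑ i ∈ range k, cos (2 * π * i * t / n)| ≤ n / (2 * t) := by
  have hn : (0 : ℝ) < n := by linarith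
  have hsin : 2 * t / n ≤ sin (2 * π * t / n / 2) := by
    have hx : π * t / n ≤ π / 2 := by
      rw [div_le_div_iff₀ hn two_pos]
      nlinarith [pi_pos]
    calc 2 * t / n = 2 / π * (π * t / n) := by field_simp
      _ ≤ sin (π * t / n) := mul_le_sin (by positivity) hx
      _ = sin (2 * π * t / n / 2) := by ring_nf
  have hpos : 0 < 2 * t / n := by positivity
  calc |∑ i ∈ range k, cos (2 * π * i * t / n)|
      = |∑ i ∈ range k, cos (i * (2 * π * t / n))| := by
        congr 1; exact sum_congr rfl fun i _ => by ring_nf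
    _ ≤ 1 / |sin (2 * π * t / n / 2)| := abs_sum_range_cos_mul_le (by linarith) k
    _ ≤ 1 / (2 * t / n) := by
        rw [abs_of_pos (hpos.trans_le hsin)]
        gcongr
    _ = n / (2 * t) := one_div_div _ _

lemma sum_Ioc_sub_telescope {G : Type*} [AddCommGroup G] (f : ℕ → G) {m n : ℕ} (hmn : m < n) :
    ∑ i ∈ Ioc m (n - 1), (f (i + 1) - f i) = f n - f (m + 1) := by
  rw [← Ico_add_one_add_one_eq_Ioc, Nat.sub_add_cancel (by omega), sum_Ico_eq_sub _ (by omega),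
    sum_range_sub, sum_range_sub, sub_sub_sub_cancel_right]

section Abel

variable {f g : ℕ → ℝ} {m n : ℕ} {B : ℝ}

lemma abs_sum_Ioc_mul_le (hmn : m < n) (hg : ∀ k, |∑ i ∈ range k, g i| ≤ B) :
    |∑ i ∈ Ioc m n, f i * g i|
      ≤ B * (|f n| + |f (m + 1)| + ∑ i ∈ Ioc m (n - 1), |f (i + 1) - f i|) := by
  have hparts := sum_Ioc_by_parts f g hmn
  simp only [smul_eq_mul] at hparts
  have hvar : |∑ i ∈ Ioc m (n - 1), (f (i + 1) - f i) * ∑ j ∈ range (i + 1), g j|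
      ≤ ∑ i ∈ Ioc m (n - 1), |f (i + 1) - f i| * B :=
    (abs_sum_le_sum_abs _ _).trans <| sum_le_sum fun i _ => by
      rw [abs_mul]; gcongr; exact hg _
  rw [hparts, mul_add, mul_add, mul_comm B (∑ i ∈ _, _), sum_mul]
  refine (abs_sub _ _).trans (add_le_add ((abs_sub _ _).trans ?_) hvar)
  rw [abs_mul, abs_mul, mul_comm B, mul_comm B]
  gcongr <;> exact hg _

lemma abs_sum_Ioc_mul_le_of_antitoneOn (hmn : m < n) (hg : ∀ k, |∑ i ∈ range k, g i| ≤ B)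
    (hf : AntitoneOn f (Set.Icc (m + 1) n)) (hfn : 0 ≤ f n) :
    |∑ i ∈ Ioc m n, f i * g i| ≤ 2 * B * f (m + 1) := by
  have hf1 : f n ≤ f (m + 1) := hf ⟨le_rfl, hmn⟩ ⟨hmn, le_rfl⟩ hmn
  have hvar : ∑ i ∈ Ioc m (n - 1), |f (i + 1) - f i| = f (m + 1) - f n := by
    rw [← neg_sub, ← sum_Ioc_sub_telescope f hmn, ← sum_neg_distrib]
    refine sum_congr rfl fun i hi => abs_of_nonpos (sub_nonpos.2 (hf ?_ ?_ (Nat.le_succ i)))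
      <;> simp only [mem_Ioc] at hi <;> constructor <;> omega
  calc _ ≤ _ := abs_sum_Ioc_mul_le hmn hg
    _ = 2 * B * f (m + 1) := by
      rw [hvar, abs_of_nonneg hfn, abs_of_nonneg (hfn.trans hf1)]; ring

lemma abs_sum_Ioc_mul_le_of_monotoneOn (hmn : m < n) (hg : ∀ k, |∑ i ∈ range k, g i| ≤ B)
    (hf : MonotoneOn f (Set.Icc (m + 1) n)) (hf0 : 0 ≤ f (m + 1)) :
    |∑ i ∈ Ioc m n, f i * g i| ≤ 2 * B * f n := by
  have hf1 : f (m + 1) ≤ f n := hf ⟨le_rfl, hmn⟩ ⟨hmn, le_rfl⟩ hmn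
  have hvar : ∑ i ∈ Ioc m (n - 1), |f (i + 1) - f i| = f n - f (m + 1) := by
    rw [← sum_Ioc_sub_telescope f hmn]
    refine sum_congr rfl fun i hi => abs_of_nonneg (sub_nonneg.2 (hf ?_ ?_ (Nat.le_succ i)))
      <;> simp only [mem_Ioc] at hi <;> constructor <;> omega
  calc _ ≤ _ := abs_sum_Ioc_mul_le hmn hg
    _ = 2 * B * f n := by
      rw [hvar, abs_of_nonneg hf0, abs_of_nonneg (hf0.trans hf1)]; ring

end Abel

lemma one_sub_mul_rpow_neg_le {s x : ℝ} (hs0 : 0 ≤ s) (hs1 : s ≤ 1) (hx : 1 ≤ x) :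
    (1 - s) * x ^ (-s) ≤ x ^ (1 - s) - (x - 1) ^ (1 - s) := by
  have hx0 : 0 < x := by linarith
  have hbern : (1 + -1 / x) ^ (1 - s) ≤ 1 + (1 - s) * (-1 / x) :=
    rpow_one_add_le_one_add_mul_self
      (by rw [neg_div, neg_le_neg_iff]; exact div_le_one_of_le₀ hx hx0.le) (by linarith) (by linarith)
  have hsplit : (x - 1) ^ (1 - s) = (1 + -1 / x) ^ (1 - s) * x ^ (1 - s) := by
    rw [← mul_rpow (by rw [neg_div]; linarith [div_le_one_of_le₀ hx hx0.le]) hx0.le]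
    congr 1
    field_simp
    ring
  have hdiv : x ^ (1 - s) / x = x ^ (-s) := by
    rw [← rpow_sub_one hx0.ne']
    ring_nf
  calc (1 - s) * x ^ (-s) = x ^ (1 - s) - (1 + (1 - s) * (-1 / x)) * x ^ (1 - s) := by
        rw [← hdiv]
        field_simp
        ring
    _ ≤ x ^ (1 - s) - (x - 1) ^ (1 - s) := by
        rw [hsplit]
        gcongr

lemma sum_Icc_rpow_neg_le {s : ℝ} (hs0 : 0 ≤ s) (hs1 : s < 1) (m : ℕ) :
    ∑ k ∈ Icc 1 m, (k : ℝ) ^ (-s) ≤ m ^ (1 - s) / (1 - s) := by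
  have hs : 0 < 1 - s := by linarith
  induction m with
  | zero => simp [zero_rpow hs.ne']
  | succ m ih =>
    rw [le_div_iff₀ hs] at ih ⊢
    have hstep := one_sub_mul_rpow_neg_le hs0 hs1.le (x := m + 1) (by simp)
    rw [add_sub_cancel_right] at hstep
    rw [sum_Icc_succ_top (by omega), add_mul]
    push_cast
    linarith

section Potter

variable {R : ℝ → ℝ}

lemma AntitoneOn.le_mul_rpow_of_doubling (hR : AntitoneOn R (Set.Ioi 0))
    (hR0 : ∀ x, 0 < x → 0 ≤ R x) {s X : ℝ} (hs : 0 ≤ s) (hX : 0 < X)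
    (hdouble : ∀ x, X ≤ x → R x ≤ 2 ^ s * R (2 * x)) ⦃x y : ℝ⦄ (hx : X ≤ x) (hxy : x ≤ y) :
    R x ≤ 2 ^ s * (y / x) ^ s * R y := by
  have hx0 : 0 < x := hX.trans_le hx
  have hiter : ∀ j : ℕ, R x ≤ (2 ^ s) ^ j * R (2 ^ j * x) := by
    intro j
    induction j with
    | zero => simp
    | succ j ih =>
      have hXj : X ≤ 2 ^ j * x := hx.trans (le_mul_of_one_le_left hx0.le (one_le_pow₀ one_le_two))
      calc R x ≤ (2 ^ s) ^ j * R (2 ^ j * x) := ih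
        _ ≤ (2 ^ s) ^ j * (2 ^ s * R (2 * (2 ^ j * x))) := by gcongr; exact hdouble _ hXj
        _ = (2 ^ s) ^ (j + 1) * R (2 ^ (j + 1) * x) := by
            rw [show (2 : ℝ) ^ (j + 1) * x = 2 * (2 ^ j * x) by ring, pow_succ]; ring
  obtain ⟨j, hj, hj1⟩ := exists_nat_pow_near ((one_le_div hx0).2 hxy) one_lt_two
  rw [div_lt_iff₀ hx0] at hj1
  calc R x ≤ (2 ^ s) ^ (j + 1) * R (2 ^ (j + 1) * x) := hiter _
    _ ≤ (2 ^ s) ^ (j + 1) * R y := by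
        gcongr
        exact hR (hx0.trans_le hxy) (by positivity : (0 : ℝ) < 2 ^ (j + 1) * x) hj1.le
    _ = 2 ^ s * ((2 : ℝ) ^ j) ^ s * R y := by
        rw [← rpow_natCast_mul zero_le_two, ← rpow_mul_natCast zero_le_two, ← rpow_add two_pos]
        push_cast
        ring_nf
    _ ≤ 2 ^ s * (y / x) ^ s * R y := by
        have := hR0 y (hx0.trans_le hxy)
        gcongr

lemma AntitoneOn.exists_le_mul_rpow (hR : AntitoneOn R (Set.Ioi 0))
    (hRpos : ∀ x, 0 < x → 0 < R x) {s X : ℝ} (hs : 0 ≤ s) (hX : 1 ≤ X)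
    (hdouble : ∀ x, X ≤ x → R x ≤ 2 ^ s * R (2 * x)) :
    ∃ P, 0 < P ∧ ∀ x y, 1 ≤ x → x ≤ y → R x ≤ P * (y / x) ^ s * R y := by
  have hX0 : 0 < X := by linarith
  have hRX := hRpos X hX0
  have hK : 1 ≤ R 1 / R X := (one_le_div hRX).2 (hR (Set.mem_Ioi.2 one_pos) hX0 hX)
  have hpotter := hR.le_mul_rpow_of_doubling (fun x hx => (hRpos x hx).le) hs hX0 hdouble
  have h2s : 1 ≤ (2 : ℝ) ^ s := one_le_rpow one_le_two hs
  -- Below `X`, monotonicity replaces the doubling bound, at the cost of the factor `R 1 / R X`.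
  refine ⟨2 ^ s * (R 1 / R X), by positivity, fun x y hx hxy => ?_⟩
  have hx0 : 0 < x := by linarith
  have hy0 : 0 < y := by linarith
  have hRy := hRpos y hy0
  have hyx : 1 ≤ (y / x) ^ s := one_le_rpow ((one_le_div hx0).2 hxy) hs
  rcases le_total X x with hXx | hxX
  · calc R x ≤ 2 ^ s * (y / x) ^ s * R y := hpotter hXx hxy
      _ ≤ 2 ^ s * (R 1 / R X) * (y / x) ^ s * R y := by
          gcongr
          exact le_mul_of_one_le_right (by positivity) hK
  have hRX_le : R X ≤ 2 ^ s * (y / x) ^ s * R y := by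
    rcases le_total X y with hXy | hyX
    · calc R X ≤ 2 ^ s * (y / X) ^ s * R y := hpotter le_rfl hXy
        _ ≤ 2 ^ s * (y / x) ^ s * R y := by gcongr
    · calc R X ≤ R y := hR hy0 hX0 hyX
        _ ≤ 2 ^ s * (y / x) ^ s * R y :=
          le_mul_of_one_le_left hRy.le (one_le_mul_of_one_le_of_one_le h2s hyx)
  calc R x ≤ R 1 := hR (Set.mem_Ioi.2 one_pos) hx0 hx
    _ = R 1 / R X * R X := (div_mul_cancel₀ _ hRX.ne').symm
    _ ≤ R 1 / R X * (2 ^ s * (y / x) ^ s * R y) := by gcongr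
    _ = 2 ^ s * (R 1 / R X) * (y / x) ^ s * R y := by ring

lemma sum_Icc_le_of_le_mul_rpow {s P : ℝ} (hs0 : 0 ≤ s) (hs1 : s < 1) (hP : 0 ≤ P)
    (hpotter : ∀ x y, 1 ≤ x → x ≤ y → R x ≤ P * (y / x) ^ s * R y) {m : ℕ} {y : ℝ}
    (hmy : m ≤ y) (hRy : 0 ≤ R y) :
    ∑ k ∈ Icc 1 m, R k ≤ P / (1 - s) * y ^ s * m ^ (1 - s) * R y := by
  calc ∑ k ∈ Icc 1 m, R k ≤ ∑ k ∈ Icc 1 m, P * y ^ s * R y * (k : ℝ) ^ (-s) := by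
        refine sum_le_sum fun k hkm => ?_
        have hk : (1 : ℝ) ≤ k := by exact_mod_cast (mem_Icc.1 hkm).1
        have hky : (k : ℝ) ≤ y := (Nat.cast_le.2 (mem_Icc.1 hkm).2).trans hmy
        rw [rpow_neg (by linarith)]
        calc R k ≤ P * (y / k) ^ s * R y := hpotter k y hk hky
          _ = P * (y ^ s / k ^ s) * R y := by rw [div_rpow (by linarith) (by linarith)]
          _ = P * y ^ s * R y * ((k : ℝ) ^ s)⁻¹ := by ring
    _ = P * y ^ s * R y * ∑ k ∈ Icc 1 m, (k : ℝ) ^ (-s) := (mul_sum _ _ _).symm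
    _ ≤ P * y ^ s * R y * (m ^ (1 - s) / (1 - s)) := by
        have : 0 ≤ y := (Nat.cast_nonneg m).trans hmy
        gcongr
        exact sum_Icc_rpow_neg_le hs0 hs1 m
    _ = P / (1 - s) * y ^ s * m ^ (1 - s) * R y := by ring

end Potter

namespace RegularlyVarying

variable {R : ℝ → ℝ} {β : ℝ}

lemma eventually_le_mul (hRV : RegularlyVarying R β) (hRpos : ∀ x, 0 < x → 0 < R x)
    {l c : ℝ} (hl : 0 < l) (hc : l ^ β < c) : ∀ᶠ x in atTop, R (l * x) ≤ c * R x := by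
  filter_upwards [(hRV l hl).eventually (eventually_le_nhds hc), eventually_gt_atTop 0]
    with x hx hx0
  rwa [div_le_iff₀ (hRpos x hx0)] at hx

lemma eventually_mul_le (hRV : RegularlyVarying R β) (hRpos : ∀ x, 0 < x → 0 < R x)
    {l c : ℝ} (hl : 0 < l) (hc : c < l ^ β) : ∀ᶠ x in atTop, c * R x ≤ R (l * x) := by
  filter_upwards [(hRV l hl).eventually (eventually_ge_nhds hc), eventually_gt_atTop 0]
    with x hx hx0
  rwa [le_div_iff₀ (hRpos x hx0)] at hx

lemma nonpos_of_antitoneOn (hRV : RegularlyVarying R β) (hRpos : ∀ x, 0 < x → 0 < R x)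
    (hR : AntitoneOn R (Set.Ioi 0)) : β ≤ 0 := by
  have h : (2 : ℝ) ^ β ≤ 1 := le_of_tendsto (hRV 2 two_pos) <| by
    filter_upwards [eventually_gt_atTop 0] with x hx
    rw [div_le_one (hRpos x hx)]
    exact hR (Set.mem_Ioi.2 hx) (Set.mem_Ioi.2 (by positivity)) (by linarith)
  by_contra hβ
  exact (one_lt_rpow one_lt_two (not_le.1 hβ)).not_ge h

end RegularlyVarying

section CovarianceSums

variable {R : ℝ → ℝ}

lemma sum_Icc_pos (hRpos : ∀ x, 0 < x → 0 < R x) {n : ℕ} (hn : 1 ≤ n) :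
    0 < ∑ k ∈ Icc 1 n, R k :=
  sum_pos (fun k hk => hRpos k (Nat.cast_pos.2 (mem_Icc.1 hk).1)) ⟨1, mem_Icc.2 ⟨le_rfl, hn⟩⟩

lemma AntitoneOn.natCast_mul_le_sum_Icc (hR : AntitoneOn R (Set.Ioi 0)) (n : ℕ) :
    n * R n ≤ ∑ k ∈ Icc 1 n, R k := by
  have := card_nsmul_le_sum (Icc 1 n) (fun k : ℕ => R k) (R n) fun k hk => by
    have hk := mem_Icc.1 hk
    exact hR (Set.mem_Ioi.2 (Nat.cast_pos.2 hk.1)) (Set.mem_Ioi.2 (Nat.cast_pos.2 (by omega)))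
      (Nat.cast_le.2 hk.2)
  simpa using this

lemma MonotoneOn.half_mul_le_sum_Icc (hR : MonotoneOn R (Set.Ioi 0))
    (hRpos : ∀ x, 0 < x → 0 < R x) {n : ℕ} (hn : 1 ≤ n) :
    n / 2 * R (n / 2) ≤ ∑ k ∈ Icc 1 n, R k := by
  have hn0 : (0 : ℝ) < n / 2 := by positivity
  have hcard : (n : ℝ) / 2 ≤ (Ioc (n / 2) n).card := by
    rw [Nat.card_Ioc, Nat.cast_sub (Nat.div_le_self n 2)]
    linarith [Nat.cast_div_le (m := n) (n := 2) (α := ℝ)]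
  have hterm : ∀ k ∈ Ioc (n / 2) n, R (n / 2) ≤ R k := fun k hk => by
    have hk : n < 2 * k := by have := mem_Ioc.1 hk; omega
    have hk' : (n : ℝ) < 2 * k := by exact_mod_cast hk
    exact hR (Set.mem_Ioi.2 hn0) (Set.mem_Ioi.2 (by linarith)) (by linarith)
  calc n / 2 * R (n / 2) ≤ (Ioc (n / 2) n).card * R (n / 2) := by
        gcongr; exact (hRpos _ hn0).le
    _ ≤ ∑ k ∈ Ioc (n / 2) n, R k := by simpa using card_nsmul_le_sum _ _ _ hterm
    _ ≤ ∑ k ∈ Icc 1 n, R k :=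
        sum_le_sum_of_subset_of_nonneg (fun k hk => by simp only [mem_Ioc, mem_Icc] at *; omega)
          fun k hk _ => (hRpos k (Nat.cast_pos.2 (mem_Icc.1 hk).1)).le

lemma natCast_mapsTo_Ioi (m n : ℕ) :
    Set.MapsTo (Nat.cast : ℕ → ℝ) (Set.Icc (m + 1) n) (Set.Ioi 0) :=
  fun k hk => Set.mem_Ioi.2 (Nat.cast_pos.2 (by have := hk.1; omega))

lemma MonotoneOn.abs_sum_Ioc_mul_cos_le (hR : MonotoneOn R (Set.Ioi 0))
    (hRpos : ∀ x, 0 < x → 0 < R x) {m n : ℕ} (hmn : m < n) {t : ℝ} (ht1 : 1 ≤ t)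
    (ht2 : t ≤ n / 2) :
    |∑ k ∈ Ioc m n, R k * cos (2 * π * k * t / n)| ≤ n / t * R n :=
  calc _ ≤ 2 * (n / (2 * t)) * R n :=
        abs_sum_Ioc_mul_le_of_monotoneOn (f := R ∘ Nat.cast) hmn (abs_sum_range_cos_le_div ht1 ht2)
          (hR.comp (Nat.mono_cast.monotoneOn _) (natCast_mapsTo_Ioi m n))
          (hRpos _ (Nat.cast_pos.2 m.succ_pos)).le
    _ = n / t * R n := by field_simp

lemma AntitoneOn.abs_sum_Ioc_mul_cos_le (hR : AntitoneOn R (Set.Ioi 0))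
    (hRpos : ∀ x, 0 < x → 0 < R x) {m n : ℕ} (hmn : m < n) {t : ℝ} (ht1 : 1 ≤ t)
    (ht2 : t ≤ n / 2) :
    |∑ k ∈ Ioc m n, R k * cos (2 * π * k * t / n)| ≤ n / t * R (m + 1 : ℕ) :=
  calc _ ≤ 2 * (n / (2 * t)) * R (m + 1 : ℕ) :=
        abs_sum_Ioc_mul_le_of_antitoneOn (f := R ∘ Nat.cast) hmn (abs_sum_range_cos_le_div ht1 ht2)
          (hR.comp_MonotoneOn (Nat.mono_cast.monotoneOn _) (natCast_mapsTo_Ioi m n))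
          (hRpos _ (Nat.cast_pos.2 (m.zero_le.trans_lt hmn))).le
    _ = n / t * R (m + 1 : ℕ) := by field_simp

lemma abs_sum_mul_cos_le_sum {ι : Type*} (s : Finset ι) {a : ι → ℝ} (ha : ∀ i ∈ s, 0 ≤ a i)
    (x : ι → ℝ) : |∑ i ∈ s, a i * cos (x i)| ≤ ∑ i ∈ s, a i :=
  (abs_sum_le_sum_abs _ _).trans <| sum_le_sum fun i hi => by
    rw [abs_mul, abs_of_nonneg (ha i hi)]
    exact mul_le_of_le_one_right (ha i hi) (abs_cos_le_one _)

lemma abs_sum_Icc_mul_cos_le_of_le_mul_rpow (hRpos : ∀ x, 0 < x → 0 < R x) {s P : ℝ}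
    (hs0 : 0 ≤ s) (hs1 : s < 1) (hP : 0 ≤ P)
    (hpotter : ∀ x y, 1 ≤ x → x ≤ y → R x ≤ P * (y / x) ^ s * R y)
    {m n : ℕ} (hn : 0 < n) {u : ℝ} (hu : 1 ≤ u) (hm : (m : ℝ) ≤ n / u) (x : ℕ → ℝ) :
    |∑ k ∈ Icc 1 m, R k * cos (x k)| ≤ P / (1 - s) * u ^ (s - 1) * (n * R n) := by
  have hn0 : (0 : ℝ) < n := Nat.cast_pos.2 hn
  have hu0 : 0 < u := by linarith
  have hs : 0 < 1 - s := by linarith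
  calc _ ≤ ∑ k ∈ Icc 1 m, R k :=
        abs_sum_mul_cos_le_sum (Icc 1 m) (a := fun k : ℕ => R k)
          (fun k hk => (hRpos k (Nat.cast_pos.2 (mem_Icc.1 hk).1)).le) _
    _ ≤ P / (1 - s) * n ^ s * m ^ (1 - s) * R n :=
        sum_Icc_le_of_le_mul_rpow hs0 hs1 hP hpotter (hm.trans (div_le_self hn0.le hu))
          (hRpos n hn0).le
    _ ≤ P / (1 - s) * n ^ s * (n / u) ^ (1 - s) * R n := by
        have := hRpos n hn0
        gcongr
    _ = P / (1 - s) * u ^ (s - 1) * (n * R n) := by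
        rw [div_rpow hn0.le hu0.le, rpow_sub hn0, rpow_sub hu0, rpow_sub_one hu0.ne', rpow_one,
          rpow_one]
        field_simp

lemma AntitoneOn.abs_sum_Icc_mul_cos_le (hR : AntitoneOn R (Set.Ioi 0))
    (hRpos : ∀ x, 0 < x → 0 < R x) {s P : ℝ} (hs0 : 0 ≤ s) (hs1 : s < 1) (hP : 0 ≤ P)
    (hpotter : ∀ x y, 1 ≤ x → x ≤ y → R x ≤ P * (y / x) ^ s * R y)
    {n : ℕ} {t : ℝ} (ht1 : 1 ≤ t) (ht2 : t ≤ n / 2) :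
    |∑ k ∈ Icc 1 n, R k * cos (2 * π * k * t / n)|
      ≤ P * (1 / (1 - s) + 2) * (2 * t) ^ (s - 1) * (n * R n) := by
  have hn0 : (0 : ℝ) < n := by linarith
  have hu : 0 < 2 * t := by linarith
  have hRn := hRpos n hn0
  -- Splitting at `n / (2t)` rather than `n / t` keeps `m + 1 ≤ n`, as the Potter bound needs.
  set m := ⌊n / (2 * t)⌋₊
  have hm : (m : ℝ) ≤ n / (2 * t) := Nat.floor_le (by positivity)
  have hm1 : n / (2 * t) < m + 1 := Nat.lt_floor_add_one _
  have hmn : m < n := by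
    have : (m : ℝ) < n := hm.trans_lt ((div_lt_iff₀ hu).2 (by nlinarith))
    exact_mod_cast this
  have hhead := abs_sum_Icc_mul_cos_le_of_le_mul_rpow hRpos hs0 hs1 hP hpotter
    (m.zero_le.trans_lt hmn) (by linarith) hm (fun k => 2 * π * k * t / n)
  have htail : |∑ k ∈ Ioc m n, R k * cos (2 * π * k * t / n)|
      ≤ 2 * P * (2 * t) ^ (s - 1) * (n * R n) :=
    calc _ ≤ n / t * R (m + 1 : ℕ) := hR.abs_sum_Ioc_mul_cos_le hRpos hmn ht1 ht2
      _ ≤ n / t * (P * (n / (m + 1 : ℕ)) ^ s * R n) := by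
          gcongr
          exact hpotter _ _ (by simp) (Nat.cast_le.2 hmn)
      _ ≤ n / t * (P * (2 * t) ^ s * R n) := by
          gcongr
          rw [div_le_iff₀ (by positivity), Nat.cast_add_one, mul_comm]
          exact ((div_lt_iff₀ hu).1 hm1).le
      _ = 2 * P * (2 * t) ^ (s - 1) * (n * R n) := by
          rw [rpow_sub_one hu.ne']
          field_simp
  rw [show Icc 1 n = Ioc 0 n from Icc_add_one_left_eq_Ioc 0 n,
    ← sum_Ioc_consecutive _ (Nat.zero_le m) hmn.le,
    show Ioc 0 m = Icc 1 m from (Icc_add_one_left_eq_Ioc 0 m).symm]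
  calc _ ≤ _ := abs_add_le _ _
    _ ≤ _ := add_le_add hhead htail
    _ = _ := by ring

end CovarianceSums

section Cases

variable {R : ℝ → ℝ} {α : ℝ}

lemma MonotoneOn.exists_abs_covariance_le (hR : MonotoneOn R (Set.Ioi 0))
    (hRpos : ∀ x, 0 < x → 0 < R x) (hRV : RegularlyVarying R (-α)) :
    ∃ C, 0 < C ∧ ∃ n₀ : ℕ, ∀ n : ℕ, n₀ ≤ n → ∀ t : ℝ, 1 ≤ t → t ≤ n / 2 →
      |(∑ k ∈ Icc 1 n, R k * cos (2 * π * k * t / n)) / ∑ k ∈ Icc 1 n, R k| ≤ C * (1 / t) := by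
  set D := (2 : ℝ) ^ (-α) + 1
  obtain ⟨X, hX⟩ := eventually_atTop.1 (hRV.eventually_le_mul hRpos two_pos (lt_add_one _))
  refine ⟨2 * D, by positivity, ⌈2 * X⌉₊, fun n hn t ht1 ht2 => ?_⟩
  have hn1 : 1 ≤ n := by exact_mod_cast (show (1 : ℝ) ≤ n by linarith)
  have hσ := sum_Icc_pos hRpos hn1
  have hdouble : R n ≤ D * R (n / 2) := by
    have := hX (n / 2) (by linarith [Nat.ceil_le.1 hn])
    rwa [mul_div_cancel₀ _ two_ne_zero] at this
  rw [abs_div, abs_of_pos hσ, div_le_iff₀ hσ]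
  calc _ ≤ n / t * R n := by
        rw [show Icc 1 n = Ioc 0 n from Icc_add_one_left_eq_Ioc 0 n]
        exact hR.abs_sum_Ioc_mul_cos_le hRpos hn1 ht1 ht2
    _ ≤ n / t * (D * R (n / 2)) := by gcongr
    _ = 2 * D * (1 / t) * (n / 2 * R (n / 2)) := by ring
    _ ≤ 2 * D * (1 / t) * ∑ k ∈ Icc 1 n, R k := by
        gcongr
        exact hR.half_mul_le_sum_Icc hRpos hn1

lemma AntitoneOn.exists_abs_covariance_le (hR : AntitoneOn R (Set.Ioi 0))
    (hRpos : ∀ x, 0 < x → 0 < R x) (hα : α < 1) (hRV : RegularlyVarying R (-α))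
    {δ : ℝ} (hδ : 0 < δ) :
    ∃ C, 0 < C ∧ ∀ n : ℕ, ∀ t : ℝ, 1 ≤ t → t ≤ n / 2 →
      |(∑ k ∈ Icc 1 n, R k * cos (2 * π * k * t / n)) / ∑ k ∈ Icc 1 n, R k|
        ≤ C * t ^ (α - 1 + δ) := by
  have hα0 : 0 ≤ α := by linarith [hRV.nonpos_of_antitoneOn hRpos hR]
  obtain ⟨s, hαs, hs1, hsδ⟩ : ∃ s, α < s ∧ s < 1 ∧ s - 1 ≤ α - 1 + δ :=
    ⟨α + min δ (1 - α) / 2, by linarith [lt_min hδ (sub_pos.2 hα)],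
      by linarith [min_le_right δ (1 - α)], by linarith [min_le_left δ (1 - α)]⟩
  have h2s : 0 < (2 : ℝ) ^ s := by positivity
  have hc : ((2 : ℝ) ^ s)⁻¹ < 2 ^ (-α) := by
    rw [← rpow_neg zero_le_two]
    exact rpow_lt_rpow_of_exponent_lt one_lt_two (neg_lt_neg hαs)
  obtain ⟨X, hX⟩ := eventually_atTop.1
    ((hRV.eventually_mul_le hRpos two_pos hc).and (eventually_ge_atTop 1))
  obtain ⟨P, hP, hpotter⟩ := hR.exists_le_mul_rpow hRpos (hα0.trans hαs.le) (hX X le_rfl).2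
    fun x hx => (inv_mul_le_iff₀ h2s).1 (hX x hx).1
  have hs : 0 < 1 - s := by linarith
  refine ⟨P * (1 / (1 - s) + 2), by positivity, fun n t ht1 ht2 => ?_⟩
  have hn1 : 1 ≤ n := by exact_mod_cast (show (1 : ℝ) ≤ n by linarith)
  have hσ := sum_Icc_pos hRpos hn1
  have hpow : (2 * t) ^ (s - 1) ≤ t ^ (α - 1 + δ) :=
    (rpow_le_rpow_of_nonpos (by linarith) (by linarith) (by linarith)).trans
      (rpow_le_rpow_of_exponent_le ht1 hsδ)
  rw [abs_div, abs_of_pos hσ, div_le_iff₀ hσ]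
  calc _ ≤ P * (1 / (1 - s) + 2) * (2 * t) ^ (s - 1) * (n * R n) :=
        hR.abs_sum_Icc_mul_cos_le hRpos (hα0.trans hαs.le) hs1 hP.le hpotter ht1 ht2
    _ ≤ P * (1 / (1 - s) + 2) * t ^ (α - 1 + δ) * ∑ k ∈ Icc 1 n, R k :=
        mul_le_mul (mul_le_mul_of_nonneg_left hpow (by positivity))
          (hR.natCast_mul_le_sum_Icc n) (by positivity [hRpos n (by positivity)]) (by positivity)

end Cases

theorem covariance_decay_bound_general
    (R : ℝ → ℝ) (hRpos : ∀ x : ℝ, 0 < x → 0 < R x)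
    (hRmono : MonotoneOn R (Set.Ioi (0 : ℝ)) ∨ AntitoneOn R (Set.Ioi (0 : ℝ)))
    (α : ℝ) (hα : α < 1) (hRV : RegularlyVarying R (-α))
    (ρ : ℕ → ℝ → ℝ)
    (hρ : ∀ (n : ℕ) (t : ℝ), ρ n t =
      (∑ k ∈ Finset.Icc 1 n, R k * Real.cos (2 * π * k * t / n)) /
        (∑ k ∈ Finset.Icc 1 n, R k)) :
    ∀ δ : ℝ, 0 < δ → ∃ C : ℝ, 0 < C ∧ ∃ n₀ : ℕ, ∀ n : ℕ, n₀ ≤ n →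
      ∀ t : ℝ, 1 ≤ t → t ≤ (n : ℝ) / 2 →
        |ρ n t| ≤ C * max (t ^ (α - 1 + δ)) (1 / t) := by
  intro δ hδ
  rcases hRmono with hmono | hanti
  · obtain ⟨C, hC, n₀, hbound⟩ := hmono.exists_abs_covariance_le hRpos hRV
    refine ⟨C, hC, n₀, fun n hn t ht1 ht2 => ?_⟩
    rw [hρ]
    exact (hbound n hn t ht1 ht2).trans (by gcongr; exact le_max_right _ _)
  · obtain ⟨C, hC, hbound⟩ := hanti.exists_abs_covariance_le hRpos hα hRV hδ
    refine ⟨C, hC, 0, fun n _ t ht1 ht2 => ?_⟩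
    rw [hρ]
    exact (hbound n t ht1 ht2).trans (by gcongr; exact le_max_left _ _)

/-- Decay of the covariance `ρ_n(t) = σ_n^{-2} Σ_{k=1}^n R(k) cos(2πkt/n)` for a
monotone regularly varying `R` with index `-α`, `α < 1`: for every `δ > 0` one has
`|ρ_n(t)| ≤ C max(t^{α-1+δ}, 1/t)` for `n` large and `t ∈ [1, n/2]`. -/
theorem covariance_decay_bound
    (R : ℝ → ℝ) (hRpos : ∀ x : ℝ, 0 < x → 0 < R x)
    (hRmono : MonotoneOn R (Set.Ioi (0 : ℝ)) ∨ AntitoneOn R (Set.Ioi (0 : ℝ)))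
    (hRbdd : ∀ K : Set ℝ, K ⊆ Set.Ioi 0 → IsCompact K →
      ∃ m M : ℝ, 0 < m ∧ ∀ x ∈ K, m ≤ R x ∧ R x ≤ M)
    (α : ℝ) (hα : α < 1) (hRV : RegularlyVarying R (-α))
    (ρ : ℕ → ℝ → ℝ)
    (hρ : ∀ (n : ℕ) (t : ℝ), ρ n t =
      (∑ k ∈ Finset.Icc 1 n, R k * Real.cos (2 * π * k * t / n)) /
        (∑ k ∈ Finset.Icc 1 n, R k)) :
    ∀ δ : ℝ, 0 < δ → ∃ C : ℝ, 0 < C ∧ ∃ n₀ : ℕ, ∀ n : ℕ, n₀ ≤ n →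
      ∀ t : ℝ, 1 ≤ t → t ≤ (n : ℝ) / 2 →
        |ρ n t| ≤ C * max (t ^ (α - 1 + δ)) (1 / t) :=
  covariance_decay_bound_general R hRpos hRmono α hα hRV ρ hρ
end
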